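/- Let G be a strongly connected digraph with start vertex s and dominator tree D(s). Let r be a vertex and v a vertex that is not a descendant of r in D(s). Then there is a path in G from v to r containing no proper descendant of r in D(s), and every path from v to any descendant of r in D(s) contains r. -/

import Mathlib

variable {V : Type*}

/-- Mutual reachability (strong connectivity of a pair) in the digraph `E`. -/
def SConn (E : V → V → Prop) (u v : V) : Prop :=
  Relation.ReflTransGen E u v ∧ Relation.ReflTransGen E v u

/-- The digraph obtained from `E` by deleting vertex `w` (and incident edges). -/
def delV (E : V → V → Prop) (w : V) : V → V → Prop :=
  fun a b => E a b ∧ a ≠ w ∧ b ≠ w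

/-- The digraph obtained from `E` by deleting the single edge `(a,b)`. -/
def delE (E : V → V → Prop) (a b : V) : V → V → Prop :=
  fun x y => E x y ∧ ¬(x = a ∧ y = b)

/-- `u` and `v` are vertex-resilient: they are distinct and remain strongly
connected after deletion of any single other vertex. -/
def VRes (E : V → V → Prop) (u v : V) : Prop :=
  u ≠ v ∧ ∀ w, w ≠ u → w ≠ v → SConn (delV E w) u v

/-- A vertex-resilient block: a maximal set of size ≥ 2 of pairwise
vertex-resilient vertices. -/
def IsVRBlock (E : V → V → Prop) (B : Set V) : Prop :=
  B.Pairwise (VRes E) ∧ (∃ a ∈ B, ∃ b ∈ B, a ≠ b) ∧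
    ∀ B' : Set V, B ⊆ B' → B'.Pairwise (VRes E) → B' = B

/-- `l` is (the vertex list of) a directed path from `u` to `v` in `E`. -/
def IsPathList (E : V → V → Prop) (u v : V) (l : List V) : Prop :=
  l.Chain' E ∧ l.head? = some u ∧ l.getLast? = some v

/-- The internal vertices of a path given as a vertex list. -/
def internalsL (l : List V) : List V := (l.drop 1).dropLast

/-- The edges of a path given as a vertex list. -/
def edgesOfL (l : List V) : List (V × V) := l.zip l.tail

/-- There exist two internally vertex-disjoint (simple, distinct) paths from `u` to `v`. -/
def TwoVPaths (E : V → V → Prop) (u v : V) : Prop :=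
  ∃ l₁ l₂ : List V, IsPathList E u v l₁ ∧ IsPathList E u v l₂ ∧
    l₁.Nodup ∧ l₂.Nodup ∧ l₁ ≠ l₂ ∧ ∀ x ∈ internalsL l₁, x ∉ internalsL l₂

/-- `u` and `v` are 2-vertex-connected. -/
def TwoVConn (E : V → V → Prop) (u v : V) : Prop :=
  u ≠ v ∧ TwoVPaths E u v ∧ TwoVPaths E v u

/-- There exist two edge-disjoint paths from `u` to `v`. -/
def TwoEPaths (E : V → V → Prop) (u v : V) : Prop :=
  ∃ l₁ l₂ : List V, IsPathList E u v l₁ ∧ IsPathList E u v l₂ ∧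
    ∀ e ∈ edgesOfL l₁, e ∉ edgesOfL l₂

/-- `u` and `v` are 2-edge-connected. -/
def TwoEConn (E : V → V → Prop) (u v : V) : Prop :=
  u ≠ v ∧ TwoEPaths E u v ∧ TwoEPaths E v u

/-- A 2-vertex-connected block. -/
def Is2VBlock (E : V → V → Prop) (B : Set V) : Prop :=
  B.Pairwise (TwoVConn E) ∧ (∃ a ∈ B, ∃ b ∈ B, a ≠ b) ∧
    ∀ B' : Set V, B ⊆ B' → B'.Pairwise (TwoVConn E) → B' = B

/-- A 2-edge-connected block. -/
def Is2EBlock (E : V → V → Prop) (B : Set V) : Prop :=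
  B.Pairwise (TwoEConn E) ∧ (∃ a ∈ B, ∃ b ∈ B, a ≠ b) ∧
    ∀ B' : Set V, B ⊆ B' → B'.Pairwise (TwoEConn E) → B' = B

/-- The digraph `E` is strongly connected. -/
def StronglyConn (E : V → V → Prop) : Prop :=
  ∀ u v, Relation.ReflTransGen E u v

/-- `(a,b)` is a strong bridge of the strongly connected digraph `E`. -/
def IsStrongBridge (E : V → V → Prop) (a b : V) : Prop :=
  E a b ∧ ¬ StronglyConn (delE E a b)

/-- `u` dominates `w` in the flow graph with start vertex `s`:
every path from `s` to `w` contains `u`. -/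
def DomOf (E : V → V → Prop) (s u w : V) : Prop :=
  ∀ l : List V, IsPathList E s w l → u ∈ l

/-- `d` is the immediate dominator of `w` in the flow graph with start `s`:
the proper dominator of `w` dominated by all proper dominators of `w`. -/
def IdomOf (E : V → V → Prop) (s d w : V) : Prop :=
  d ≠ w ∧ DomOf E s d w ∧ ∀ u, u ≠ w → DomOf E s u w → DomOf E s u d

/-- The block graph `F` of the digraph `E`: the bipartite undirected graph on the
vertices of `E` together with its vertex-resilient blocks, a vertex `u` being
adjacent to a block node `B` exactly when `u ∈ B`. -/
def blockGraph (E : V → V → Prop) :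
    SimpleGraph (V ⊕ {B : Set V // IsVRBlock E B}) where
  Adj a b := ∃ u B, u ∈ B.1 ∧
    ((a = Sum.inl u ∧ b = Sum.inr B) ∨ (a = Sum.inr B ∧ b = Sum.inl u))
  symm := by
    constructor
    rintro a b ⟨u, B, hm, (⟨rfl, rfl⟩ | ⟨rfl, rfl⟩)⟩
    · exact ⟨u, B, hm, Or.inr ⟨rfl, rfl⟩⟩
    · exact ⟨u, B, hm, Or.inl ⟨rfl, rfl⟩⟩
  loopless := by
    constructor
    rintro a ⟨u, B, hm, (⟨rfl, h⟩ | ⟨rfl, h⟩)⟩ <;> simp at h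

/-!
Since `r` does not dominate `v`, some path from `s` to `v` avoids `r`; followed by a path from `v`
to a descendant `w` of `r` it gives a path from `s` to `w`, which must pass through `r`, hence
through `r` on the part after `v`. Applied to a single edge `(y, x)` with `y` not a descendant of
`r`, this shows that the only descendant of `r` that can be entered from outside is `r` itself.
So a walk from `v` to `r`, which exists by strong connectivity, can be cut at its first
descendant of `r`, and that vertex is `r`.
-/

namespace IsPathList

variable {E : V → V → Prop} {a b c : V} {l₁ l₂ : List V}

theorem append (h₁ : IsPathList E a b l₁) (h₂ : IsPathList E b c l₂) :
    IsPathList E a c (l₁ ++ l₂.tail) := by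
  obtain ⟨hc₁, hh₁, hg₁⟩ := h₁
  obtain ⟨hc₂, hh₂, hg₂⟩ := h₂
  obtain ⟨x, t, rfl⟩ := List.exists_cons_of_ne_nil (by rintro rfl; simp at hh₂ : l₂ ≠ [])
  obtain rfl : x = b := by simpa using hh₂
  have hne₁ : l₁ ≠ [] := by rintro rfl; simp at hh₁
  refine ⟨hc₁.append hc₂.tail ?_, by rw [List.head?_append_of_ne_nil _ hne₁, hh₁], ?_⟩
  · intro y hy z hz
    simp only [hg₁, Option.mem_def, Option.some.injEq] at hy
    subst hy
    exact hc₂.rel_head? hz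
  · cases t with
    | nil => simpa [hg₁] using hg₂
    | cons z t => simpa [List.getLast?_append] using hg₂

end IsPathList

theorem exists_isPathList_of_unique_entry {E : V → V → Prop} {p : V → Prop} {v r : V}
    (hentry : ∀ a b, E a b → ¬ p a → p b → b = r)
    (hvr : Relation.ReflTransGen E v r) (hv : ¬ p v) :
    ∃ l, IsPathList E v r l ∧ ∀ x ∈ l, p x → x = r := by
  let R a b := E a b ∧ (p b → b = r)
  have hR : Relation.ReflTransGen R v r := by
    refine Relation.ReflTransGen.head_induction_on
      (motive := fun a _ => ¬ p a → Relation.ReflTransGen R a r) hvr (fun _ => .refl) ?_ hv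
    intro a b hab _ ih ha
    by_cases hb : p b
    · obtain rfl := hentry a b hab ha hb
      exact .single ⟨hab, fun _ => rfl⟩
    · exact .head ⟨hab, fun h => absurd h hb⟩ (ih hb)
  obtain ⟨l, hchain, hlast⟩ := List.exists_isChain_cons_of_relationReflTransGen hR
  have hpath : IsPathList E v r (v :: l) :=
    ⟨hchain.imp fun _ _ h => h.1, rfl, by rw [List.getLast?_eq_some_getLast (by simp), hlast]⟩
  refine ⟨v :: l, hpath, ?_⟩
  have hl := hchain.cons_induction (fun x => p x → x = r) l (fun _ _ h _ => h.2) (absurd · hv)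
  rintro x (_ | ⟨_, hx⟩)
  · exact (absurd · hv)
  · exact hl x hx

namespace DomOf

variable {E : V → V → Prop} {s r v w : V}

theorem mem_of_isPathList (hw : DomOf E s r w) (hv : ¬ DomOf E s r v) {l : List V}
    (hl : IsPathList E v w l) : r ∈ l := by
  obtain ⟨l₀, hl₀, hr⟩ : ∃ l₀, IsPathList E s v l₀ ∧ r ∉ l₀ := by simpa [DomOf] using hv
  rcases List.mem_append.1 (hw _ (hl₀.append hl)) with h | h
  · exact absurd h hr
  · exact List.mem_of_mem_tail h

theorem eq_of_rel (hv : ¬ DomOf E s r v) (hvw : E v w) (hw : DomOf E s r w) : w = r := by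
  have hpath : IsPathList E v w [v, w] := ⟨List.isChain_pair.2 hvw, rfl, rfl⟩
  rcases List.mem_pair.1 (hw.mem_of_isPathList hv hpath) with rfl | rfl
  · exact absurd (fun _ hl => List.mem_of_getLast? hl.2.2) hv
  · rfl

end DomOf

theorem stmt10 (E : V → V → Prop) (s : V) (hsc : StronglyConn E)
    (r v : V) (hv : ¬ DomOf E s r v) :
    (∃ l : List V, IsPathList E v r l ∧ ∀ x ∈ l, DomOf E s r x → x = r) ∧
    (∀ w, DomOf E s r w → ∀ l : List V, IsPathList E v w l → r ∈ l) :=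
  ⟨exists_isPathList_of_unique_entry (fun _ _ hab ha hb => DomOf.eq_of_rel ha hab hb)
      (hsc v r) hv,
    fun _ hw _ hl => hw.mem_of_isPathList hv hl⟩
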